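/- Principle of Open Induction on Cantor space (OI(C), derived in the paper from the Approximate-Fan Theorem in Theorem 12.3(ii); classically valid): let B : List Bool → Bool and let U := {γ : ℕ → Bool | ∃ n, B (γ↾n) = true}. Define γ ≺ δ iff there exists n with γ↾n = δ↾n, γ n = false and δ n = true. If U is progressive, i.e. for every γ : ℕ → Bool, ({δ | δ ≺ γ} ⊆ U) → γ ∈ U, then every γ : ℕ → Bool belongs to U. -/

import Mathlib

/-- The first `n` values of `γ` as a list. -/
def seg (γ : ℕ → Bool) (n : ℕ) : List Bool := List.ofFn fun i : Fin n => γ i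

/-- `γ ≺ δ`: at the first place where they differ, `γ` is `false` and `δ` is `true`. -/
def Prec (γ δ : ℕ → Bool) : Prop :=
  ∃ n, seg γ n = seg δ n ∧ γ n = false ∧ δ n = true

/-!
The complement `F` of `U` is closed, so if it is nonempty it has a `≺`-least element: follow the
leftmost branch of the binary tree of finite prefixes of elements of `F`, and use closedness to see
that this branch lies in `F`. Every `δ ≺ γ` then lies in `U`, so progressiveness puts `γ` in `U`.
-/

@[simp]
lemma length_seg (γ : ℕ → Bool) (n : ℕ) : (seg γ n).length = n := List.length_ofFn

lemma seg_succ (γ : ℕ → Bool) (n : ℕ) : seg γ (n + 1) = seg γ n ++ [γ n] := by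
  simp only [seg, List.ofFn_succ', Fin.val_castSucc, Fin.val_last, List.concat_eq_append]

section LeftBranch

variable (P : List Bool → Prop) [DecidablePred P]

/-- The prefix of length `n` of the leftmost branch of the tree `P`: go left whenever possible. -/
def leftBranch : ℕ → List Bool
  | 0 => []
  | n + 1 => leftBranch n ++ [!decide (P (leftBranch n ++ [false]))]

def leftBranchSeq (n : ℕ) : Bool := !decide (P (leftBranch P n ++ [false]))

lemma seg_leftBranchSeq (n : ℕ) : seg (leftBranchSeq P) n = leftBranch P n := by
  induction n with
  | zero => rfl
  | succ n ih => rw [seg_succ, ih]; rfl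

lemma leftBranchSeq_eq_true {n : ℕ} :
    leftBranchSeq P n = true ↔ ¬ P (seg (leftBranchSeq P) n ++ [false]) := by
  simp [leftBranchSeq, seg_leftBranchSeq]

variable {P}

lemma leftBranch_mem (hnil : P []) (hstep : ∀ l, P l → P (l ++ [false]) ∨ P (l ++ [true]))
    (n : ℕ) : P (leftBranch P n) := by
  induction n with
  | zero => exact hnil
  | succ n ih =>
    by_cases hleft : P (leftBranch P n ++ [false])
    · simp [leftBranch, hleft]
    · simpa [leftBranch, hleft] using hstep _ ih

end LeftBranch

def prefixes (F : Set (ℕ → Bool)) (l : List Bool) : Prop :=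
  ∃ δ ∈ F, seg δ l.length = l

lemma prefixes_nil {F : Set (ℕ → Bool)} (hF : F.Nonempty) : prefixes F [] :=
  let ⟨δ, hδ⟩ := hF
  ⟨δ, hδ, rfl⟩

lemma prefixes_seg_succ {F : Set (ℕ → Bool)} {δ : ℕ → Bool} (hδ : δ ∈ F) (n : ℕ) :
    prefixes F (seg δ n ++ [δ n]) :=
  ⟨δ, hδ, by rw [← seg_succ, length_seg]⟩

lemma prefixes_append_false_or_true {F : Set (ℕ → Bool)} {l : List Bool} :
    prefixes F l → prefixes F (l ++ [false]) ∨ prefixes F (l ++ [true]) := by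
  rintro ⟨δ, hδ, hseg⟩
  rw [← hseg]
  cases hbit : δ l.length
  · exact .inl (by simpa [hbit] using prefixes_seg_succ hδ l.length)
  · exact .inr (by simpa [hbit] using prefixes_seg_succ hδ l.length)

/-- `hclosed` says that `F` is closed in Cantor space. -/
theorem exists_forall_not_prec {F : Set (ℕ → Bool)} (hne : F.Nonempty)
    (hclosed : ∀ γ, (∀ n, ∃ δ ∈ F, seg δ n = seg γ n) → γ ∈ F) :
    ∃ γ ∈ F, ∀ δ ∈ F, ¬ Prec δ γ := by
  classical
  set γ := leftBranchSeq (prefixes F)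
  have hγ : ∀ n, prefixes F (seg γ n) := fun n => by
    rw [seg_leftBranchSeq]
    exact leftBranch_mem (prefixes_nil hne) (fun _ => prefixes_append_false_or_true) n
  refine ⟨γ, hclosed γ fun n => ?_, ?_⟩
  · obtain ⟨δ, hδ, hseg⟩ := hγ n
    exact ⟨δ, hδ, by simpa using hseg⟩
  · rintro δ hδ ⟨n, hseg, hδn, hγn⟩
    refine (leftBranchSeq_eq_true _).1 hγn ?_
    simpa [hseg, hδn] using prefixes_seg_succ hδ n

/-- Principle of Open Induction on Cantor space (OI(C), Theorem 12.3(ii);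
classically valid): if the open set `U` determined by `B` is progressive with
respect to `≺`, then `U` is all of Cantor space. -/
theorem open_induction_cantor (B : List Bool → Bool)
    (hprog : ∀ γ : ℕ → Bool,
      (∀ δ : ℕ → Bool, Prec δ γ → ∃ n, B (seg δ n) = true) →
      ∃ n, B (seg γ n) = true) :
    ∀ γ : ℕ → Bool, ∃ n, B (seg γ n) = true := by
  by_contra! hne
  have hclosed : ∀ γ, (∀ n, ∃ δ ∈ {δ | ∀ n, B (seg δ n) ≠ true}, seg δ n = seg γ n) →
      ∀ n, B (seg γ n) ≠ true := fun γ h n => by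
    obtain ⟨δ, hδ, hseg⟩ := h n
    exact hseg ▸ hδ n
  obtain ⟨γ, hγ, hleast⟩ := exists_forall_not_prec hne hclosed
  obtain ⟨n, hn⟩ := hprog γ fun δ hδ => by
    by_contra! hδF
    exact hleast δ hδF hδ
  exact hγ n hn
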